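/- arXiv:2603.19859 — 2 statements merged into one kernel-verified Lean document; each statement's English description precedes it below -/
import Mathlib

section
/- Under the same hypotheses, for any N₀ ∈ X and any solution N(t,s) = U(t,s)e^{-d(t-s)}N₀ + ∫_s^t U(t,r)e^{-d(t-r)}Λ dr, one has ‖N(t,s) - N*(t)‖ ≤ e^{-(λ₀+d)(t-s)}‖N₀ - N*(s)‖, so N(t,s) → N*(t) as t-s → ∞, both in the forward (t → ∞) and pullback (s → -∞) senses. -/
/-!
Subtracting the two variation-of-constants formulas, the forcing integrals over `(s, t]` cancel
and the tail of `N*(t)` over `(-∞, s]` is, by the cocycle property, `U(t,s)e^{-d(t-s)}N*(s)`.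
Hence `N(t,s) - N*(t) = e^{-d(t-s)} U(t,s)(N₀ - N*(s))`, which gives the exponential estimate.
Forward attraction follows for fixed `s`; pullback attraction uses in addition the uniform bound
`‖N*(s)‖ ≤ ‖Λ‖/(λ₀ + d)`.
-/

open MeasureTheory Filter Set Real Topology

lemma integrableOn_exp_neg_mul_sub_Iic {c : ℝ} (hc : 0 < c) (t : ℝ) :
    IntegrableOn (fun r => exp (-c * (t - r))) (Iic t) := by
  simp_rw [mul_sub, sub_eq_add_neg, exp_add, neg_mul, neg_neg]
  exact (integrableOn_exp_mul_Iic hc t).const_mul _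

lemma integral_exp_neg_mul_sub_Iic {c : ℝ} (hc : 0 < c) (t : ℝ) :
    ∫ r in Iic t, exp (-c * (t - r)) = c⁻¹ := by
  simp_rw [mul_sub, sub_eq_add_neg, exp_add, neg_mul, neg_neg]
  rw [integral_const_mul, integral_exp_mul_Iic hc t, mul_div_assoc', ← exp_add, neg_add_cancel,
    exp_zero, one_div]

lemma tendsto_exp_neg_mul_sub_atTop {c : ℝ} (hc : 0 < c) (s : ℝ) :
    Tendsto (fun t => exp (-c * (t - s))) atTop (𝓝 0) :=
  tendsto_exp_atBot.comp <|
    (tendsto_atTop_add_const_right _ (-s) tendsto_id).const_mul_atTop_of_neg (neg_lt_zero.2 hc)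

lemma tendsto_exp_neg_mul_sub_atBot {c : ℝ} (hc : 0 < c) (t : ℝ) :
    Tendsto (fun s => exp (-c * (t - s))) atBot (𝓝 0) :=
  tendsto_exp_atBot.comp <|
    (tendsto_atTop_add_const_left _ t tendsto_neg_atBot_atTop).const_mul_atTop_of_neg
      (neg_lt_zero.2 hc)

section EvolutionFamily

variable {X : Type*} [NormedAddCommGroup X] [NormedSpace ℝ X]
  {U : ℝ → ℝ → X →L[ℝ] X} {l₀ d : ℝ}

lemma norm_exp_smul_apply_le (hU : ∀ t s, s ≤ t → ‖U t s‖ ≤ exp (-l₀ * (t - s))) {t s : ℝ}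
    (hst : s ≤ t) (x : X) :
    ‖exp (-d * (t - s)) • U t s x‖ ≤ exp (-(l₀ + d) * (t - s)) * ‖x‖ :=
  calc ‖exp (-d * (t - s)) • U t s x‖
      ≤ exp (-d * (t - s)) * (exp (-l₀ * (t - s)) * ‖x‖) := by
        rw [norm_smul, norm_of_nonneg (exp_pos _).le]
        gcongr
        exact (U t s).le_of_opNorm_le (hU t s hst) x
    _ = exp (-(l₀ + d) * (t - s)) * ‖x‖ := by rw [← mul_assoc, ← exp_add]; ring_nf

lemma integrableOn_exp_smul_apply_Iic (hU : ∀ t s, s ≤ t → ‖U t s‖ ≤ exp (-l₀ * (t - s)))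
    (hcont : ∀ t, Continuous fun s => U t s) (hc : 0 < l₀ + d) (x : X) (t : ℝ) :
    IntegrableOn (fun r => exp (-d * (t - r)) • U t r x) (Iic t) := by
  refine ((integrableOn_exp_neg_mul_sub_Iic hc t).mul_const ‖x‖).mono' ?_ ?_
  · have : Continuous fun r => exp (-d * (t - r)) • U t r x := by fun_prop
    exact this.aestronglyMeasurable
  · filter_upwards [ae_restrict_mem measurableSet_Iic] with r hr
    exact norm_exp_smul_apply_le hU hr x

lemma norm_integral_exp_smul_apply_Iic_le (hU : ∀ t s, s ≤ t → ‖U t s‖ ≤ exp (-l₀ * (t - s)))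
    (hc : 0 < l₀ + d) (x : X) (t : ℝ) :
    ‖∫ r in Iic t, exp (-d * (t - r)) • U t r x‖ ≤ ‖x‖ / (l₀ + d) := by
  refine (norm_integral_le_of_norm_le ((integrableOn_exp_neg_mul_sub_Iic hc t).mul_const ‖x‖)
    ?_).trans_eq ?_
  · filter_upwards [ae_restrict_mem measurableSet_Iic] with r hr
    exact norm_exp_smul_apply_le hU hr x
  · rw [integral_mul_const, integral_exp_neg_mul_sub_Iic hc, inv_mul_eq_div]

variable [CompleteSpace X]

lemma integral_Iic_exp_smul_apply_eq
    (hcoc : ∀ t s τ, τ ≤ s → s ≤ t → (U t s).comp (U s τ) = U t τ) {x : X}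
    (hint : ∀ s, IntegrableOn (fun r => exp (-d * (s - r)) • U s r x) (Iic s)) {t s : ℝ}
    (hst : s ≤ t) :
    ∫ r in Iic s, exp (-d * (t - r)) • U t r x =
      exp (-d * (t - s)) • U t s (∫ r in Iic s, exp (-d * (s - r)) • U s r x) := by
  have hfactor : ∀ r ∈ Iic s, exp (-d * (t - r)) • U t r x =
      exp (-d * (t - s)) • U t s (exp (-d * (s - r)) • U s r x) := fun r hr => by
    rw [map_smul, smul_smul, ← exp_add, ← ContinuousLinearMap.comp_apply, hcoc t s r hr hst]
    ring_nf
  rw [setIntegral_congr_fun measurableSet_Iic hfactor, integral_smul,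
    ContinuousLinearMap.integral_comp_comm _ (hint s)]

lemma exp_smul_apply_add_integral_sub_integral_Iic
    (hcoc : ∀ t s τ, τ ≤ s → s ≤ t → (U t s).comp (U s τ) = U t τ) {x : X}
    (hint : ∀ s, IntegrableOn (fun r => exp (-d * (s - r)) • U s r x) (Iic s)) (y : X) {t s : ℝ}
    (hst : s ≤ t) :
    exp (-d * (t - s)) • U t s y + (∫ r in s..t, exp (-d * (t - r)) • U t r x) -
        ∫ r in Iic t, exp (-d * (t - r)) • U t r x =
      exp (-d * (t - s)) • U t s (y - ∫ r in Iic s, exp (-d * (s - r)) • U s r x) := by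
  rw [← intervalIntegral.integral_Iic_sub_Iic ((hint t).mono_set (Iic_subset_Iic.2 hst))
      (hint t),
    integral_Iic_exp_smul_apply_eq hcoc hint hst, map_sub, smul_sub]
  abel

end EvolutionFamily

theorem disease_free_attracts_general {X : Type*} [NormedAddCommGroup X]
    [NormedSpace ℝ X] [CompleteSpace X]
    (U : ℝ → ℝ → X →L[ℝ] X) (l₀ d : ℝ) (hl₀ : 0 < l₀) (hd : 0 < d)
    (hU : ∀ t s, s ≤ t → ‖U t s‖ ≤ Real.exp (-l₀ * (t - s)))
    (hcoc : ∀ t s τ, τ ≤ s → s ≤ t → (U t s).comp (U s τ) = U t τ)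
    (hcont : ∀ t, Continuous fun s => U t s) (Λ : X) (N₀ : X)
    (Nstar : ℝ → X)
    (hNstar : ∀ t, Nstar t = ∫ r in Set.Iic t, Real.exp (-d * (t - r)) • U t r Λ)
    (N : ℝ → ℝ → X)
    (hN : ∀ t s, N t s = Real.exp (-d * (t - s)) • U t s N₀ +
      ∫ r in s..t, Real.exp (-d * (t - r)) • U t r Λ) :
    (∀ t s, s ≤ t →
      ‖N t s - Nstar t‖ ≤ Real.exp (-(l₀ + d) * (t - s)) * ‖N₀ - Nstar s‖) ∧
    (∀ s, Tendsto (fun t => N t s - Nstar t) atTop (nhds 0)) ∧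
    (∀ t, Tendsto (fun s => N t s - Nstar t) atBot (nhds 0)) := by
  have hc : 0 < l₀ + d := by positivity
  have hint := integrableOn_exp_smul_apply_Iic hU hcont hc Λ
  have hest : ∀ t s, s ≤ t →
      ‖N t s - Nstar t‖ ≤ exp (-(l₀ + d) * (t - s)) * ‖N₀ - Nstar s‖ := fun t s hst => by
    rw [hN, hNstar t, hNstar s, exp_smul_apply_add_integral_sub_integral_Iic hcoc hint N₀ hst]
    exact norm_exp_smul_apply_le hU hst _
  have hNstar_bound : ∀ s, ‖N₀ - Nstar s‖ ≤ ‖N₀‖ + ‖Λ‖ / (l₀ + d) := fun s =>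
    (norm_sub_le _ _).trans <| add_le_add_right
      (hNstar s ▸ norm_integral_exp_smul_apply_Iic_le hU hc Λ s) _
  refine ⟨hest, fun s => ?_, fun t => ?_⟩
  · refine squeeze_zero_norm' ((eventually_ge_atTop s).mono fun t hst => hest t s hst) ?_
    simpa using (tendsto_exp_neg_mul_sub_atTop hc s).mul_const ‖N₀ - Nstar s‖
  · refine squeeze_zero_norm' ((eventually_le_atBot t).mono fun s hst =>
      (hest t s hst).trans (mul_le_mul_of_nonneg_left (hNstar_bound s) (exp_pos _).le)) ?_
    simpa using
      (tendsto_exp_neg_mul_sub_atBot hc t).mul_const (‖N₀‖ + ‖Λ‖ / (l₀ + d))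

/-- Forward and pullback attraction of the disease-free solution `N*`:
`‖N(t,s) - N*(t)‖ ≤ e^{-(λ₀+d)(t-s)}‖N₀ - N*(s)‖`. -/
theorem disease_free_attracts {X : Type*} [NormedAddCommGroup X]
    [NormedSpace ℝ X] [CompleteSpace X]
    (U : ℝ → ℝ → X →L[ℝ] X) (l₀ d : ℝ) (hl₀ : 0 < l₀) (hd : 0 < d)
    (hU : ∀ t s, s ≤ t → ‖U t s‖ ≤ Real.exp (-l₀ * (t - s)))
    (hid : ∀ t, U t t = ContinuousLinearMap.id ℝ X)
    (hcoc : ∀ t s τ, τ ≤ s → s ≤ t → (U t s).comp (U s τ) = U t τ)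
    (hcont : ∀ t, Continuous fun s => U t s) (Λ : X) (N₀ : X)
    (Nstar : ℝ → X)
    (hNstar : ∀ t, Nstar t = ∫ r in Set.Iic t, Real.exp (-d * (t - r)) • U t r Λ)
    (N : ℝ → ℝ → X)
    (hN : ∀ t s, N t s = Real.exp (-d * (t - s)) • U t s N₀ +
      ∫ r in s..t, Real.exp (-d * (t - r)) • U t r Λ) :
    (∀ t s, s ≤ t →
      ‖N t s - Nstar t‖ ≤ Real.exp (-(l₀ + d) * (t - s)) * ‖N₀ - Nstar s‖) ∧
    (∀ s, Tendsto (fun t => N t s - Nstar t) atTop (nhds 0)) ∧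
    (∀ t, Tendsto (fun s => N t s - Nstar t) atBot (nhds 0)) :=
  disease_free_attracts_general U l₀ d hl₀ hd hU hcoc hcont Λ N₀ Nstar hNstar N hN
end

section
/- Let λ₀, d, b, c > 0 and γ : ℝ → [0, Γ] bounded continuous with mean value m := limsup over t-t₀→∞ of (1/(t-t₀))∫_{t₀}^t γ < λ₀+d+b+c. If I : [t₀,∞) → [0,∞) satisfies I(t) ≤ e^{-(λ₀+d+b+c)(t-t₀)+∫_{t₀}^t γ(r)dr} I(t₀), then sup over t₀ of I(t,t₀) → 0 as t - t₀ → ∞; i.e., the decay is uniform in t₀ for t - t₀ large. -/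
open MeasureTheory intervalIntegral Filter

/-!
Once the windows are long enough, the mean of `γ` over `[t₀, t]` stays below some
`M < l₀ + d + b + c`, uniformly in `t₀`.  The Grönwall bound then gives
`I(t, t₀) ≤ C e^{-(l₀ + d + b + c - M)(t - t₀)}`, which tends to `0` in `t - t₀` at a rate
independent of `t₀`.
-/

def windowAverages (γ : ℝ → ℝ) (T : ℝ) : Set ℝ :=
  {x | ∃ t₀ t : ℝ, t - t₀ > T ∧ x = (1 / (t - t₀)) * ∫ r in t₀..t, γ r}

lemma bddAbove_windowAverages {γ : ℝ → ℝ} {Γ T : ℝ} (hγc : Continuous γ)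
    (hγ : ∀ r, γ r ≤ Γ) (hT : 0 ≤ T) : BddAbove (windowAverages γ T) := by
  refine ⟨Γ, ?_⟩
  rintro x ⟨t₀, t, ht, rfl⟩
  have hpos : 0 < t - t₀ := hT.trans_lt ht
  have hle : (∫ r in t₀..t, γ r) ≤ ∫ _ in t₀..t, Γ :=
    integral_mono_on (by linarith) (hγc.intervalIntegrable _ _) intervalIntegrable_const
      fun r _ => hγ r
  rw [intervalIntegral.integral_const, smul_eq_mul] at hle
  rw [one_div_mul_eq_div, div_le_iff₀ hpos]
  linarith

lemma integral_lt_mul_of_sSup_windowAverages_lt {γ : ℝ → ℝ} {T M : ℝ} (hT : 0 ≤ T)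
    (hbdd : BddAbove (windowAverages γ T)) (hM : sSup (windowAverages γ T) < M)
    {t₀ t : ℝ} (ht : t - t₀ > T) : ∫ r in t₀..t, γ r < M * (t - t₀) := by
  have havg : (1 / (t - t₀)) * ∫ r in t₀..t, γ r < M :=
    (le_csSup hbdd ⟨t₀, t, ht, rfl⟩).trans_lt hM
  rwa [one_div_mul_eq_div, div_lt_iff₀ (hT.trans_lt ht)] at havg

lemma exists_integral_lt_mul_of_tendsto_sSup_windowAverages {γ : ℝ → ℝ} {Γ m M : ℝ}
    (hγc : Continuous γ) (hγ : ∀ r, γ r ≤ Γ)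
    (hm : Tendsto (fun n : ℕ => sSup (windowAverages γ n)) atTop (nhds m)) (hmM : m < M) :
    ∃ n : ℕ, ∀ t₀ t : ℝ, t - t₀ > n → ∫ r in t₀..t, γ r < M * (t - t₀) := by
  obtain ⟨n, hn⟩ := (hm.eventually (gt_mem_nhds hmM)).exists
  exact ⟨n, fun t₀ t ht => integral_lt_mul_of_sSup_windowAverages_lt n.cast_nonneg
    (bddAbove_windowAverages hγc hγ n.cast_nonneg) hn ht⟩

lemma uniform_tendsto_zero_of_le_exp {f : ℝ → ℝ → ℝ} {T₀ δ C : ℝ} (hδ : 0 < δ)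
    (hf : ∀ t₀ t, t - t₀ > T₀ → f t t₀ ≤ Real.exp (-δ * (t - t₀)) * C) :
    ∀ ε > 0, ∃ T > 0, ∀ t₀ t : ℝ, t - t₀ > T → f t t₀ < ε := by
  intro ε hε
  have hdecay : Tendsto (fun s => Real.exp (-δ * s) * C) atTop (nhds 0) := by
    simpa [neg_mul] using
      (Real.tendsto_exp_neg_atTop_nhds_zero.comp (tendsto_id.const_mul_atTop hδ)).mul_const C
  obtain ⟨S, hS⟩ := eventually_atTop.mp (hdecay.eventually (gt_mem_nhds hε))
  refine ⟨max (max S T₀) 1, by positivity, fun t₀ t ht => ?_⟩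
  have hS' : S ≤ t - t₀ := by linarith [le_max_left S T₀, le_max_left (max S T₀) 1]
  have hT₀ : t - t₀ > T₀ := by linarith [le_max_right S T₀, le_max_left (max S T₀) 1]
  exact (hf t₀ t hT₀).trans_lt (hS _ hS')

theorem infected_uniform_decay_general (l₀ d b c Γ : ℝ) (γ : ℝ → ℝ) (hγc : Continuous γ)
    (hγ : ∀ r, γ r ∈ Set.Icc 0 Γ) (m : ℝ)
    (hm : Tendsto (fun n : ℕ => sSup {x : ℝ | ∃ t₀ t : ℝ, t - t₀ > (n : ℝ) ∧
        x = (1 / (t - t₀)) * ∫ r in t₀..t, γ r}) atTop (nhds m))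
    (hm2 : m < l₀ + d + b + c)
    (I : ℝ → ℝ → ℝ) (hI0 : ∀ t t₀, 0 ≤ I t t₀)
    (C : ℝ) (hC : ∀ t₀, I t₀ t₀ ≤ C)
    (hIb : ∀ t₀ t, t₀ ≤ t → I t t₀ ≤
      Real.exp (-(l₀ + d + b + c) * (t - t₀) + ∫ r in t₀..t, γ r) * I t₀ t₀) :
    ∀ ε > 0, ∃ T > 0, ∀ t₀ t : ℝ, t - t₀ > T → I t t₀ < ε := by
  set L := l₀ + d + b + c
  obtain ⟨M, hmM, hML⟩ := exists_between hm2
  obtain ⟨n, hn⟩ := exists_integral_lt_mul_of_tendsto_sSup_windowAverages hγc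
    (fun r => (hγ r).2) hm hmM
  have hbound : ∀ t₀ t : ℝ, t - t₀ > n → I t t₀ ≤ Real.exp (-(L - M) * (t - t₀)) * C := by
    intro t₀ t ht
    have hexp : -L * (t - t₀) + ∫ r in t₀..t, γ r ≤ -(L - M) * (t - t₀) := by
      linarith [hn t₀ t ht]
    calc I t t₀ ≤ Real.exp (-L * (t - t₀) + ∫ r in t₀..t, γ r) * I t₀ t₀ :=
          hIb t₀ t (by linarith [n.cast_nonneg (α := ℝ)])
      _ ≤ Real.exp (-(L - M) * (t - t₀)) * C :=
          mul_le_mul (Real.exp_le_exp.mpr hexp) (hC t₀) (hI0 t₀ t₀) (Real.exp_pos _).le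
  exact uniform_tendsto_zero_of_le_exp (sub_pos.mpr hML) hbound

/-- Uniform (in `t₀`) eradication: if the mean transmission value `m` satisfies
`m < l₀+d+b+c` and the infected population obeys the Grönwall bound with uniformly
bounded initial data, then `I(t,t₀) → 0` uniformly in `t₀` as `t - t₀ → ∞`. -/
theorem infected_uniform_decay (l₀ d b c Γ : ℝ) (hl : 0 < l₀) (hd : 0 < d)
    (hb : 0 < b) (hc : 0 < c) (γ : ℝ → ℝ) (hγc : Continuous γ)
    (hγ : ∀ r, γ r ∈ Set.Icc 0 Γ) (m : ℝ)
    (hm : Tendsto (fun n : ℕ => sSup {x : ℝ | ∃ t₀ t : ℝ, t - t₀ > (n : ℝ) ∧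
        x = (1 / (t - t₀)) * ∫ r in t₀..t, γ r}) atTop (nhds m))
    (hm2 : m < l₀ + d + b + c)
    (I : ℝ → ℝ → ℝ) (hI0 : ∀ t t₀, 0 ≤ I t t₀)
    (C : ℝ) (hC : ∀ t₀, I t₀ t₀ ≤ C)
    (hIb : ∀ t₀ t, t₀ ≤ t → I t t₀ ≤
      Real.exp (-(l₀ + d + b + c) * (t - t₀) + ∫ r in t₀..t, γ r) * I t₀ t₀) :
    ∀ ε > 0, ∃ T > 0, ∀ t₀ t : ℝ, t - t₀ > T → I t t₀ < ε :=
  infected_uniform_decay_general l₀ d b c Γ γ hγc hγ m hm hm2 I hI0 C hC hIb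
end
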